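/- For the linear system ξ̇ = A(t)ξ on an interval I = [t_a, t_b], if the trajectory is in the hyperbolic region on I (Ŝ(t) indefinite and M̂(t) positive definite on the zero-strain set for all t ∈ I), then the t_a-fibre of the finite-time unstable set equals the set of nondecreasing directions at t_a: 𝕎^u_I(t_a) := {ξ ∈ ℝ² : d/dm ‖X(m,t_a)ξ‖ > 0 for all m ∈ I} has closure equal to Ψ⁺(t_a) = {ξ : d/dm ‖X(m,t_a)ξ‖ |_{m=t_a} ≥ 0}. -/

import Mathlib

/-!
Along a trajectory `v(t) = X(t) ξ` the squared norm `‖v‖²` has derivative `2 vᵀ Ŝ v` and the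
strain `vᵀ Ŝ v` has derivative `vᵀ M̂ v`. Positive strain is therefore never lost on `I`: at a
first zero of the strain, `‖v‖²` has been strictly increasing, so `v ≠ 0`, and hyperbolicity
makes the strain strictly increasing there, which is impossible for a first zero. Hence the
unstable fibre is the open cone `{ξ | ξᵀ Ŝ(t_a) ξ > 0}`, and since `Ŝ(t_a)` has a direction `u` of
positive strain, its closure is `Ψ⁺(t_a) = {ξ | ξᵀ Ŝ(t_a) ξ ≥ 0}`: for every `c > 0` one of
`ξ ± c u` has positive strain whenever `ξ` has nonnegative strain.
-/

open Matrix Set Filter Topology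

section Calculus

variable {m n : Type*} [Fintype n]

theorem hasDerivAt_dotProduct {v w : ℝ → n → ℝ} {v' w' : n → ℝ} {t : ℝ}
    (hv : HasDerivAt v v' t) (hw : HasDerivAt w w' t) :
    HasDerivAt (fun s => v s ⬝ᵥ w s) (v' ⬝ᵥ w t + v t ⬝ᵥ w') t := by
  rw [hasDerivAt_pi] at hv hw
  simpa only [dotProduct, ← Finset.sum_add_distrib] using
    HasDerivAt.fun_sum fun i _ => (hv i).fun_mul (hw i)

theorem hasDerivAt_mulVec {B : ℝ → Matrix m n ℝ} {B' : Matrix m n ℝ} {v : ℝ → n → ℝ}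
    {v' : n → ℝ} {t : ℝ} (hB : ∀ i j, HasDerivAt (fun s => B s i j) (B' i j) t)
    (hv : HasDerivAt v v' t) :
    HasDerivAt (fun s => B s *ᵥ v s) (B' *ᵥ v t + B t *ᵥ v') t :=
  hasDerivAt_pi.2 fun i => hasDerivAt_dotProduct (hasDerivAt_pi.2 (hB i)) hv

theorem hasDerivAt_dotProduct_self_of_linear {A : Matrix n n ℝ} {v : ℝ → n → ℝ} {t : ℝ}
    (hv : HasDerivAt v (A *ᵥ v t) t) :
    HasDerivAt (fun s => v s ⬝ᵥ v s) (2 * (v t ⬝ᵥ ((1 / 2 : ℝ) • (A + Aᵀ)) *ᵥ v t)) t := by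
  convert hasDerivAt_dotProduct hv hv using 1
  rw [smul_mulVec, dotProduct_smul, add_mulVec, dotProduct_add, dotProduct_mulVec _ Aᵀ,
    vecMul_transpose, dotProduct_comm (v t), smul_eq_mul]
  ring

theorem hasDerivAt_dotProduct_mulVec_of_linear {A B' : Matrix n n ℝ} {B : ℝ → Matrix n n ℝ}
    {v : ℝ → n → ℝ} {t : ℝ} (hv : HasDerivAt v (A *ᵥ v t) t)
    (hB : ∀ i j, HasDerivAt (fun s => B s i j) (B' i j) t) :
    HasDerivAt (fun s => v s ⬝ᵥ B s *ᵥ v s) (v t ⬝ᵥ (B' + B t * A + Aᵀ * B t) *ᵥ v t) t := by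
  convert hasDerivAt_dotProduct hv (hasDerivAt_mulVec hB hv) using 1
  rw [add_mulVec, add_mulVec, ← mulVec_mulVec, ← mulVec_mulVec, dotProduct_add, dotProduct_add,
    dotProduct_mulVec _ Aᵀ, vecMul_transpose]
  ring

theorem eventually_nhdsLT_neg_of_hasDerivAt_pos {f : ℝ → ℝ} {f' x : ℝ} (hf : HasDerivAt f f' x)
    (hf' : 0 < f') (hx : f x = 0) : ∀ᶠ y in 𝓝[<] x, f y < 0 := by
  have hslope := (hasDerivAt_iff_tendsto_slope.mp hf).mono_left (nhdsLT_le_nhdsNE x)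
  filter_upwards [hslope.eventually (eventually_gt_nhds hf'), self_mem_nhdsWithin]
    with y hy hyx
  exact neg_of_slope_pos hyx hy hx

theorem pos_on_Icc_of_deriv_pos_at_first_zero {Q D : ℝ → ℝ} {a b : ℝ}
    (hQ : ∀ t ∈ Icc a b, HasDerivAt Q (D t) t) (ha : 0 < Q a)
    (hD : ∀ c ∈ Ioc a b, Q c = 0 → (∀ t ∈ Ico a c, 0 < Q t) → 0 < D c) :
    ∀ t ∈ Icc a b, 0 < Q t := by
  by_contra! hex
  set K := {t ∈ Icc a b | Q t ≤ 0}
  have hKcl : IsClosed K := ContinuousOn.preimage_isClosed_of_isClosed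
    (fun t ht => (hQ t ht).continuousAt.continuousWithinAt) isClosed_Icc isClosed_Iic
  have hKbdd : BddBelow K := ⟨a, fun t ht => ht.1.1⟩
  set c := sInf K
  have hcK : c ∈ K := hKcl.csInf_mem hex hKbdd
  have hac : a < c := hcK.1.1.lt_of_ne (by rintro hca; rw [← hca] at hcK; linarith [hcK.2])
  have hbefore : ∀ t ∈ Ico a c, 0 < Q t := fun t ht => not_le.1 fun hle =>
    notMem_of_lt_csInf ht.2 hKbdd ⟨⟨ht.1, ht.2.le.trans hcK.1.2⟩, hle⟩
  have hneg : ∀ᶠ t in 𝓝[<] c, Q t < 0 := by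
    rcases hcK.2.lt_or_eq with hlt | hzero
    · exact ((hQ c hcK.1).continuousAt.eventually_lt continuousAt_const hlt).filter_mono
        nhdsWithin_le_nhds
    · exact eventually_nhdsLT_neg_of_hasDerivAt_pos (hQ c hcK.1)
        (hD c ⟨hac, hcK.1.2⟩ hzero hbefore) hzero
  obtain ⟨t, hQt, ht⟩ := (hneg.and (Ico_mem_nhdsLT hac)).exists
  exact (hbefore t ht).not_gt hQt

end Calculus

section Strain

variable {n : Type*} [Fintype n]

theorem dotProduct_mulVec_add_add_sub (S : Matrix n n ℝ) (ξ w : n → ℝ) :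
    (ξ + w) ⬝ᵥ S *ᵥ (ξ + w) + (ξ - w) ⬝ᵥ S *ᵥ (ξ - w) = 2 * (ξ ⬝ᵥ S *ᵥ ξ + w ⬝ᵥ S *ᵥ w) := by
  simp only [mulVec_add, mulVec_sub, add_dotProduct, sub_dotProduct, dotProduct_add,
    dotProduct_sub]
  ring

theorem closure_setOf_dotProduct_mulVec_pos {S : Matrix n n ℝ} {u : n → ℝ}
    (hu : 0 < u ⬝ᵥ S *ᵥ u) :
    closure {ξ | 0 < ξ ⬝ᵥ S *ᵥ ξ} = {ξ | 0 ≤ ξ ⬝ᵥ S *ᵥ ξ} := by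
  have hcont : Continuous fun ξ : n → ℝ => ξ ⬝ᵥ S *ᵥ ξ :=
    continuous_id.dotProduct (continuous_const.matrix_mulVec continuous_id)
  refine (closure_minimal (fun ξ h => le_of_lt h) (isClosed_le continuous_const hcont)).antisymm
    fun ξ (hξ : 0 ≤ ξ ⬝ᵥ S *ᵥ ξ) => Metric.mem_closure_iff.2 fun ε hε => ?_
  obtain ⟨c, hc, hcε⟩ := exists_pos_mul_lt hε ‖u‖
  have hnorm : dist ξ (ξ + c • u) < ε ∧ dist ξ (ξ - c • u) < ε := by
    simp only [dist_eq_norm, sub_add_cancel_left, sub_sub_cancel, norm_neg, norm_smul,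
      Real.norm_of_nonneg hc.le]
    constructor <;> linarith
  have hsum := dotProduct_mulVec_add_add_sub S ξ (c • u)
  rw [mulVec_smul, dotProduct_smul, smul_dotProduct, smul_eq_mul, smul_eq_mul] at hsum
  have hcu : 0 < c * (c * (u ⬝ᵥ S *ᵥ u)) := by positivity
  by_cases hplus : 0 < (ξ + c • u) ⬝ᵥ S *ᵥ (ξ + c • u)
  · exact ⟨ξ + c • u, hplus, hnorm.1⟩
  · exact ⟨ξ - c • u, show 0 < (ξ - c • u) ⬝ᵥ S *ᵥ (ξ - c • u) by linarith, hnorm.2⟩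

theorem strain_pos_of_hyperbolic {A S S' M : ℝ → Matrix n n ℝ} {v : ℝ → n → ℝ} {a b : ℝ}
    (hv : ∀ t, HasDerivAt v (A t *ᵥ v t) t)
    (hS : ∀ t, S t = (1 / 2 : ℝ) • (A t + (A t)ᵀ))
    (hS' : ∀ t i j, HasDerivAt (fun s => S s i j) (S' t i j) t)
    (hM : ∀ t, M t = S' t + S t * A t + (A t)ᵀ * S t)
    (hpos : ∀ t ∈ Icc a b, ∀ z, z ≠ 0 → z ⬝ᵥ S t *ᵥ z = 0 → 0 < z ⬝ᵥ M t *ᵥ z)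
    (ha : 0 < v a ⬝ᵥ S a *ᵥ v a) :
    ∀ t ∈ Icc a b, 0 < v t ⬝ᵥ S t *ᵥ v t := by
  refine pos_on_Icc_of_deriv_pos_at_first_zero (D := fun t => v t ⬝ᵥ M t *ᵥ v t)
    (fun t _ => ?_) ha fun c hc hzero hbefore => ?_
  · rw [hM]
    exact hasDerivAt_dotProduct_mulVec_of_linear (hv t) (hS' t)
  refine hpos c (Ioc_subset_Icc_self hc) _ ?_ hzero
  have hmono : StrictMonoOn (fun t => v t ⬝ᵥ v t) (Icc a c) := by
    refine strictMonoOn_of_hasDerivWithinAt_pos (convex_Icc a c)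
      (fun t _ => (hasDerivAt_dotProduct (hv t) (hv t)).continuousAt.continuousWithinAt)
      (fun t _ => (hasDerivAt_dotProduct_self_of_linear (hv t)).hasDerivWithinAt)
      fun t ht => ?_
    rw [interior_Icc] at ht
    rw [← hS]
    exact mul_pos two_pos (hbefore t ⟨ht.1.le, ht.2⟩)
  intro hvc
  have hlt : v a ⬝ᵥ v a < v c ⬝ᵥ v c :=
    hmono (left_mem_Icc.2 hc.1.le) (right_mem_Icc.2 hc.1.le) hc.1
  rw [hvc, dotProduct_zero] at hlt
  exact (dotProduct_self_star_nonneg (v a)).not_gt hlt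

end Strain

/-- If the trajectory is in the hyperbolic region on `I = [t_a, t_b]` (`Ŝ` indefinite, `M̂`
positive definite on the zero-strain set), then the closure of the `t_a`-fibre of the
finite-time unstable set (directions whose norm under the fundamental matrix `X(m, t_a)` is
strictly increasing on `I`) equals `Ψ⁺(t_a)`, the set of directions nondecreasing at `t_a`. -/
theorem stmt16 (A A' : ℝ → Matrix (Fin 2) (Fin 2) ℝ)
    (hA' : ∀ t i j, HasDerivAt (fun s => A s i j) (A' t i j) t)
    (S Mhat : ℝ → Matrix (Fin 2) (Fin 2) ℝ)
    (hS : ∀ t, S t = (1 / 2 : ℝ) • (A t + (A t)ᵀ))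
    (hM : ∀ t, Mhat t = (1 / 2 : ℝ) • (A' t + (A' t)ᵀ) + S t * A t + (A t)ᵀ * S t)
    (ta tb : ℝ) (hab : ta ≤ tb)
    (hInd : ∀ t ∈ Set.Icc ta tb, (∃ u : Fin 2 → ℝ, 0 < u ⬝ᵥ (S t).mulVec u) ∧
      (∃ v : Fin 2 → ℝ, v ⬝ᵥ (S t).mulVec v < 0))
    (hpos : ∀ t ∈ Set.Icc ta tb, ∀ z : Fin 2 → ℝ, z ≠ 0 → z ⬝ᵥ (S t).mulVec z = 0 →
      0 < z ⬝ᵥ (Mhat t).mulVec z)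
    (X : ℝ → Matrix (Fin 2) (Fin 2) ℝ) (hX0 : X ta = 1)
    (hXd : ∀ t i j, HasDerivAt (fun s => X s i j) ((A t * X t) i j) t) :
    closure {ξ : Fin 2 → ℝ | ∀ m ∈ Set.Icc ta tb,
        0 < deriv (fun s => (X s).mulVec ξ ⬝ᵥ (X s).mulVec ξ) m}
      = {ξ : Fin 2 → ℝ | 0 ≤ deriv (fun s => (X s).mulVec ξ ⬝ᵥ (X s).mulVec ξ) ta} := by
  have hS' : ∀ t i j, HasDerivAt (fun s => S s i j) (((1 / 2 : ℝ) • (A' t + (A' t)ᵀ)) i j) t :=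
    fun t i j => by
      simp only [hS, Matrix.smul_apply, Matrix.add_apply, transpose_apply, smul_eq_mul]
      exact ((hA' t i j).fun_add (hA' t j i)).const_mul (1 / 2 : ℝ)
  have hv (ξ : Fin 2 → ℝ) (t : ℝ) : HasDerivAt (fun s => X s *ᵥ ξ) (A t *ᵥ (X t *ᵥ ξ)) t := by
    simpa only [mulVec_zero, add_zero, mulVec_mulVec] using
      hasDerivAt_mulVec (hXd t) (hasDerivAt_const t ξ)
  have hderiv (ξ : Fin 2 → ℝ) (t : ℝ) :
      deriv (fun s => X s *ᵥ ξ ⬝ᵥ X s *ᵥ ξ) t = 2 * (X t *ᵥ ξ ⬝ᵥ S t *ᵥ (X t *ᵥ ξ)) := by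
    rw [hS]; exact (hasDerivAt_dotProduct_self_of_linear (hv ξ t)).deriv
  have hfibre : {ξ : Fin 2 → ℝ | ∀ m ∈ Icc ta tb, 0 < deriv (fun s => X s *ᵥ ξ ⬝ᵥ X s *ᵥ ξ) m}
      = {ξ | 0 < ξ ⬝ᵥ S ta *ᵥ ξ} := by
    ext ξ
    simp only [mem_ofPred_eq, hderiv, mul_pos_iff_of_pos_left (two_pos : (0 : ℝ) < 2)]
    refine ⟨fun h => by simpa only [hX0, one_mulVec] using h ta ⟨le_rfl, hab⟩, fun h => ?_⟩
    exact strain_pos_of_hyperbolic (hv ξ) hS hS' hM hpos (by simpa only [hX0, one_mulVec])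
  obtain ⟨u, hu⟩ := (hInd ta ⟨le_rfl, hab⟩).1
  rw [hfibre, closure_setOf_dotProduct_mulVec_pos hu]
  simp only [hderiv, hX0, one_mulVec, mul_nonneg_iff_of_pos_left (two_pos : (0 : ℝ) < 2)]
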